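/- arXiv:2404.17223 — 2 statements merged into one kernel-verified Lean document; each statement's English description precedes it below -/
import Mathlib

section
/- Let G be a finite simple graph and let B be a set of cycles of G. Then B is a minimum cycle basis of G if and only if B is a cycle basis of G and for all cycles c1, c2 with c1 ∈ B, c2 ∉ B and λ_B(c1, c2) = 1, one has ω(c1) ≤ ω(c2). -/
namespace MCBI

variable {V : Type*} [Fintype V] [DecidableEq V]

/-- A *cycle* of a simple graph `G`: a set of edges of `G` such that every vertex of `G`
is incident to an even number of them. -/
def IsCycle (G : SimpleGraph V) (c : Finset (Sym2 V)) : Prop :=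
  (↑c : Set (Sym2 V)) ⊆ G.edgeSet ∧ ∀ v : V, Even (c.filter (fun e => v ∈ e)).card

/-- The `⊕`-sum (GF(2)-sum, i.e. iterated symmetric difference) of a finite set of cycles:
an edge lies in the sum iff it lies in an odd number of the cycles. -/
def cycleSum (D : Finset (Finset (Sym2 V))) : Finset (Sym2 V) :=
  Finset.univ.filter fun e => Odd (D.filter (fun c => e ∈ c)).card

/-- Linear independence over `ℤ/2ℤ`: no nonempty subset sums to the empty cycle. -/
def LinIndep (B : Finset (Finset (Sym2 V))) : Prop :=
  ∀ D ⊆ B, D.Nonempty → cycleSum D ≠ ∅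

/-- `B` spans every cycle of `G`. -/
def SpansCycles (G : SimpleGraph V) (B : Finset (Finset (Sym2 V))) : Prop :=
  ∀ c : Finset (Sym2 V), IsCycle G c → ∃ D ⊆ B, cycleSum D = c

/-- A *cycle basis* of `G`: a linearly independent set of cycles spanning every cycle of `G`. -/
def IsCycleBasis (G : SimpleGraph V) (B : Finset (Finset (Sym2 V))) : Prop :=
  (∀ c ∈ B, IsCycle G c) ∧ LinIndep B ∧ SpansCycles G B

/-- `λ_B(c, d) = 1`: the cycle `c` belongs to a subset of `B` summing to `d`
(the unique such subset when `B` is a basis). -/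
def lambdaEq1 (B : Finset (Finset (Sym2 V))) (c d : Finset (Sym2 V)) : Prop :=
  ∃ D ⊆ B, cycleSum D = d ∧ c ∈ D

/-- Total weight of a set of cycles: the sum of the numbers of edges of its cycles. -/
def weight (B : Finset (Finset (Sym2 V))) : ℕ := ∑ c ∈ B, c.card

/-- A *minimum cycle basis*: a cycle basis of minimum total weight. -/
def IsMCB (G : SimpleGraph V) (B : Finset (Finset (Sym2 V))) : Prop :=
  IsCycleBasis G B ∧
    ∀ B' : Finset (Finset (Sym2 V)), IsCycleBasis G B' → weight B ≤ weight B'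

/-- Membership in the `ℤ/2ℤ`-linear span of a set `S` of cycles. -/
def InSpan (S : Set (Finset (Sym2 V))) (c : Finset (Sym2 V)) : Prop :=
  ∃ D : Finset (Finset (Sym2 V)), (↑D : Set (Finset (Sym2 V))) ⊆ S ∧ cycleSum D = c

/-- The vertices incident to the edges of a cycle. -/
def cycVerts (c : Finset (Sym2 V)) : Finset V :=
  Finset.univ.filter fun v => ∃ e ∈ c, v ∈ e

/-- A finite set of edges forms a connected subgraph: the graph consisting of these edges
together with their endpoints is connected. -/
def EdgesConnected (E : Finset (Sym2 V)) : Prop :=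
  ((SimpleGraph.fromEdgeSet (↑E : Set (Sym2 V))).induce {v : V | ∃ e ∈ E, v ∈ e}).Connected

/-- An *elementary cycle*: a nonempty cycle whose edges form a connected subgraph in which
every incident vertex has degree exactly `2`. -/
def IsElementaryCycle (G : SimpleGraph V) (c : Finset (Sym2 V)) : Prop :=
  IsCycle G c ∧ c.Nonempty ∧
    (∀ v : V, (∃ e ∈ c, v ∈ e) → (c.filter (fun e => v ∈ e)).card = 2) ∧
    EdgesConnected c

/-- The family of independent sets of the matroid `𝓜(G)`: the sets of cycles contained
in some minimum cycle basis of `G`. -/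
def matroidIndep (G : SimpleGraph V) : Set (Finset (Finset (Sym2 V))) :=
  {D | ∃ B, IsMCB G B ∧ D ⊆ B}

/-- A set `B` of cycles of the intersection graph `G` is *feasible* for the instance
`G₁, …, G_k` if for every `i` there is a minimum cycle basis of `Gᵢ` containing `B`. -/
def Feasible {k : ℕ} (Gs : Fin k → SimpleGraph V) (G : SimpleGraph V)
    (B : Finset (Finset (Sym2 V))) : Prop :=
  (∀ c ∈ B, IsCycle G c) ∧ ∀ i : Fin k, ∃ Bi, IsMCB (Gs i) Bi ∧ B ⊆ Bi

end MCBI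

/-!
Identify a set of edges with its characteristic vector over `ZMod 2`; a cycle basis is then a
basis of the cycle space, and `λ_B(c, d) = 1` says that `c` has a nonzero coordinate in the
expansion of `d` in the basis `B`.

If `B` is minimum and `λ_B(c₁, c₂) = 1` with `c₂ ∉ B`, the Steinitz exchange of `c₁` for `c₂`
yields another cycle basis, whose weight `ω(B) - ω(c₁) + ω(c₂)` is at least `ω(B)`.

Conversely, for any cycle basis `B'` the change-of-basis matrix from `B'` to `B` is invertible,
so some term of the Leibniz expansion of its determinant is nonzero. This term is a bijection
`π : B' → B` with `λ_B(π d, d) = 1` for every `d ∈ B'`, and local minimality gives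
`ω(π d) ≤ ω(d)` termwise (for `d ∈ B` the expansion of `d` is `d` itself, so `π d = d`).
-/

open Submodule

section LinearAlgebra

variable {ι R M : Type*}

theorem sum_ite_mem_smul [Semiring R] [AddCommMonoid M] [Module R M] [DecidableEq ι]
    {s D : Finset ι} (hD : D ⊆ s) (v : ι → M) :
    ∑ i ∈ s, (if i ∈ D then 1 else 0 : R) • v i = ∑ i ∈ D, v i := by
  simp [ite_smul, Finset.sum_ite_mem, Finset.inter_eq_right.mpr hD]

theorem LinearIndepOn.eq_of_sum_eq_sum [Semiring R] [Nontrivial R] [AddCommMonoid M]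
    [Module R M] {v : ι → M} {s D E : Finset ι} (hs : LinearIndepOn R v ↑s) (hD : D ⊆ s)
    (hE : E ⊆ s) (h : ∑ i ∈ D, v i = ∑ i ∈ E, v i) : D = E := by
  classical
  have hind := linearIndepOn_finset_iffₛ.mp hs (fun i => if i ∈ D then 1 else 0)
    (fun i => if i ∈ E then 1 else 0) (by rwa [sum_ite_mem_smul hD, sum_ite_mem_smul hE])
  ext i
  by_cases hi : i ∈ s
  · have := hind i hi
    split_ifs at this <;> simp_all
  · exact iff_of_false (fun h => hi (hD h)) (fun h => hi (hE h))

theorem LinearIndepOn.exchange [DivisionRing R] [AddCommGroup M] [Module R M] {v : ι → M}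
    {s : Set ι} {x y : ι} (hs : LinearIndepOn R v s) (hx : x ∈ s)
    (hy : v y ∈ span R (v '' s)) (hyx : v y ∉ span R (v '' (s \ {x}))) :
    LinearIndepOn R v (insert y (s \ {x})) ∧
      span R (v '' insert y (s \ {x})) = span R (v '' s) := by
  refine ⟨(hs.mono Set.sdiff_subset).insert hyx, le_antisymm ?_ ?_⟩
  · rw [span_le, Set.image_insert_eq, Set.insert_subset_iff]
    exact ⟨hy, (Set.image_mono Set.sdiff_subset).trans subset_span⟩
  · rw [span_le]
    rintro _ ⟨z, hz, rfl⟩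
    rw [Set.image_insert_eq]
    by_cases hzx : z = x
    · subst hzx
      refine mem_span_insert_exchange ?_ hyx
      rwa [← Set.image_insert_eq, Set.insert_sdiff_singleton, Set.insert_eq_of_mem hz]
    · exact subset_span (Set.mem_insert_of_mem _ ⟨z, ⟨hz, hzx⟩, rfl⟩)

theorem Matrix.exists_perm_forall_ne_zero_of_det_ne_zero [Fintype ι] [DecidableEq ι]
    [CommRing R] {A : Matrix ι ι R} (h : A.det ≠ 0) : ∃ σ : Equiv.Perm ι, ∀ j, A (σ j) j ≠ 0 := by
  by_contra! hA
  refine h ((Matrix.det_apply A).trans (Finset.sum_eq_zero fun σ _ => ?_))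
  obtain ⟨j, hj⟩ := hA σ
  exact smul_eq_zero_of_right _ (Finset.prod_eq_zero (Finset.mem_univ j) hj)

theorem Module.Basis.exists_equiv_repr_ne_zero {ι' : Type*} [Fintype ι] [Fintype ι']
    [DecidableEq ι] [CommRing R] [Nontrivial R] [AddCommGroup M] [Module R M]
    (b : Module.Basis ι R M) (b' : Module.Basis ι' R M) :
    ∃ e : ι' ≃ ι, ∀ i, b.repr (b' i) (e i) ≠ 0 := by
  set f := b'.indexEquiv b
  have hdet : (b.toMatrix (b'.reindex f)).det ≠ 0 := by
    rw [← Module.Basis.det_apply]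
    exact (b.isUnit_det _).ne_zero
  obtain ⟨σ, hσ⟩ := Matrix.exists_perm_forall_ne_zero_of_det_ne_zero hdet
  refine ⟨f.trans σ, fun i => ?_⟩
  simpa [Module.Basis.toMatrix_apply] using hσ (f i)

theorem Module.Basis.mem_of_repr_sum_ne_zero [Semiring R] [AddCommMonoid M] [Module R M]
    [DecidableEq ι] (b : Module.Basis ι R M) {T : Finset ι} {i : ι}
    (h : b.repr (∑ j ∈ T, b j) i ≠ 0) : i ∈ T := by
  by_contra hi
  simp [map_sum, Finsupp.single_apply, hi] at h

namespace ZMod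

theorem eq_zero_or_eq_one (a : ZMod 2) : a = 0 ∨ a = 1 := by
  decide +revert

variable [AddCommGroup M] [Module (ZMod 2) M]

theorem sum_smul_eq_sum_filter (s : Finset ι) (g : ι → ZMod 2) (v : ι → M) :
    ∑ i ∈ s, g i • v i = ∑ i ∈ s with g i = 1, v i := by
  rw [Finset.sum_filter]
  refine Finset.sum_congr rfl fun i _ => ?_
  rcases eq_zero_or_eq_one (g i) with h | h <;> simp [h]

theorem mem_span_image_iff_exists_sum {s : Finset ι} {v : ι → M} {x : M} :
    x ∈ span (ZMod 2) (v '' s) ↔ ∃ D ⊆ s, ∑ i ∈ D, v i = x := by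
  classical
  rw [mem_span_image_finset_iff_exists_fun']
  constructor
  · rintro ⟨g, rfl⟩
    exact ⟨_, Finset.filter_subset _ s, (sum_smul_eq_sum_filter s g v).symm⟩
  · rintro ⟨D, hD, rfl⟩
    exact ⟨_, sum_ite_mem_smul hD v⟩

theorem linearIndepOn_iff_forall_sum_eq_zero {s : Finset ι} {v : ι → M} :
    LinearIndepOn (ZMod 2) v ↑s ↔ ∀ D ⊆ s, ∑ i ∈ D, v i = 0 → D = ∅ := by
  refine ⟨fun hs D hD h => hs.eq_of_sum_eq_sum hD (Finset.empty_subset s) (by simpa),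
    fun h => linearIndepOn_finset_iff.mpr fun g hg i hi => ?_⟩
  have hempty := h _ (Finset.filter_subset _ s) ((sum_smul_eq_sum_filter s g v).symm.trans hg)
  refine (eq_zero_or_eq_one (g i)).resolve_right fun h1 => ?_
  have hmem : i ∈ ({j ∈ s | g j = 1} : Finset ι) := Finset.mem_filter.mpr ⟨hi, h1⟩
  simp [hempty] at hmem

end ZMod

end LinearAlgebra

namespace MCBI

section CharVec

variable {V : Type*} [DecidableEq V]

def charVec (c : Finset (Sym2 V)) : Sym2 V → ZMod 2 := fun e => if e ∈ c then 1 else 0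

theorem charVec_injective : Function.Injective (charVec (V := V)) := by
  intro c d h
  ext e
  have he := congrFun h e
  simp only [charVec] at he
  split_ifs at he <;> simp_all

@[simp] theorem charVec_empty : charVec (∅ : Finset (Sym2 V)) = 0 := by
  funext e
  simp [charVec]

end CharVec

variable {V : Type*} [Fintype V] [DecidableEq V]

theorem charVec_cycleSum (D : Finset (Finset (Sym2 V))) :
    charVec (cycleSum D) = ∑ c ∈ D, charVec c := by
  funext e
  simp only [charVec, cycleSum, Finset.mem_filter, Finset.mem_univ, true_and, Finset.sum_apply,
    Finset.sum_boole]
  split_ifs with h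
  · exact (ZMod.natCast_eq_one_iff_odd.mpr h).symm
  · exact (ZMod.natCast_eq_zero_iff_even.mpr (Nat.not_odd_iff_even.mp h)).symm

theorem linIndep_iff_linearIndepOn {B : Finset (Finset (Sym2 V))} :
    LinIndep B ↔ LinearIndepOn (ZMod 2) charVec (↑B : Set (Finset (Sym2 V))) := by
  simp only [ZMod.linearIndepOn_iff_forall_sum_eq_zero, LinIndep, ← charVec_cycleSum,
    ← charVec_empty, charVec_injective.eq_iff, ← Finset.not_nonempty_iff_eq_empty, not_imp_not,
    ne_eq, not_not]

theorem cycleSum_singleton (c : Finset (Sym2 V)) : cycleSum {c} = c :=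
  charVec_injective (by rw [charVec_cycleSum, Finset.sum_singleton])

theorem LinIndep.eq_of_cycleSum_eq {B D E : Finset (Finset (Sym2 V))} (hB : LinIndep B)
    (hD : D ⊆ B) (hE : E ⊆ B) (h : cycleSum D = cycleSum E) : D = E :=
  (linIndep_iff_linearIndepOn.mp hB).eq_of_sum_eq_sum hD hE (by
    rw [← charVec_cycleSum, ← charVec_cycleSum, h])

theorem charVec_mem_span_iff {S : Finset (Finset (Sym2 V))} {c : Finset (Sym2 V)} :
    charVec c ∈ span (ZMod 2) (charVec '' ↑S) ↔ ∃ D ⊆ S, cycleSum D = c := by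
  simp only [ZMod.mem_span_image_iff_exists_sum, ← charVec_cycleSum, charVec_injective.eq_iff]

def cycleSpace (G : SimpleGraph V) : Submodule (ZMod 2) (Sym2 V → ZMod 2) :=
  span (ZMod 2) (charVec '' {c | IsCycle G c})

theorem spansCycles_iff_cycleSpace_le {G : SimpleGraph V} {B : Finset (Finset (Sym2 V))} :
    SpansCycles G B ↔ cycleSpace G ≤ span (ZMod 2) (charVec '' ↑B) := by
  rw [cycleSpace, span_le, Set.image_subset_iff]
  simp only [Set.subset_def, Set.mem_preimage, SetLike.mem_coe, charVec_mem_span_iff]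
  rfl

namespace IsCycleBasis

variable {G : SimpleGraph V} {B : Finset (Finset (Sym2 V))}

theorem span_charVec_eq (hB : IsCycleBasis G B) :
    span (ZMod 2) (charVec '' ↑B) = cycleSpace G :=
  le_antisymm (span_mono (Set.image_mono hB.1)) (spansCycles_iff_cycleSpace_le.mp hB.2.2)

noncomputable def basis (hB : IsCycleBasis G B) : Module.Basis B (ZMod 2) (cycleSpace G) :=
  (Module.Basis.span (linIndep_iff_linearIndepOn.mp hB.2.1)).map
    (LinearEquiv.ofEq _ _ (by rw [← Set.image_eq_range, hB.span_charVec_eq]))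

@[simp] theorem coe_basis (hB : IsCycleBasis G B) (c : B) :
    (hB.basis c : Sym2 V → ZMod 2) = charVec c := by
  rw [basis, Module.Basis.map_apply, LinearEquiv.coe_ofEq_apply]
  exact congrArg Subtype.val (Module.Basis.span_apply _ c)

theorem exists_equiv_lambdaEq1 (hB : IsCycleBasis G B) {B' : Finset (Finset (Sym2 V))}
    (hB' : IsCycleBasis G B') : ∃ e : B' ≃ B, ∀ d, lambdaEq1 B (e d) d := by
  obtain ⟨e, he⟩ := hB.basis.exists_equiv_repr_ne_zero hB'.basis
  refine ⟨e, fun d => ?_⟩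
  obtain ⟨D, hDB, hDd⟩ := hB.2.2 d (hB'.1 d d.2)
  have hsum : hB'.basis d = ∑ c ∈ D.subtype (· ∈ B), hB.basis c := by
    ext1
    simp [Finset.sum_subtype_eq_sum_filter, Finset.filter_true_of_mem hDB, ← charVec_cycleSum,
      hDd]
  have hmem := hB.basis.mem_of_repr_sum_ne_zero (hsum ▸ he d)
  exact ⟨D, hDB, hDd, Finset.mem_subtype.mp hmem⟩

theorem exchange (hB : IsCycleBasis G B) {c₁ c₂ : Finset (Sym2 V)} (hc₁ : c₁ ∈ B)
    (hc₂ : IsCycle G c₂) (hrep : lambdaEq1 B c₁ c₂) :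
    IsCycleBasis G (insert c₂ (B.erase c₁)) := by
  have hli := linIndep_iff_linearIndepOn.mp hB.2.1
  have hspan : charVec c₂ ∈ span (ZMod 2) (charVec '' ↑B) :=
    hB.span_charVec_eq ▸ subset_span ⟨c₂, hc₂, rfl⟩
  -- `c₁` occurs in the unique representation of `c₂`, so `B \ {c₁}` cannot represent `c₂`
  have hnspan : charVec c₂ ∉ span (ZMod 2) (charVec '' (↑B \ {c₁})) := by
    rw [← Finset.coe_erase, charVec_mem_span_iff]
    rintro ⟨E, hE, hEd⟩
    obtain ⟨D, hDB, hDd, hc₁D⟩ := hrep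
    have hDE := hB.2.1.eq_of_cycleSum_eq hDB (hE.trans (B.erase_subset c₁)) (hDd.trans hEd.symm)
    exact B.notMem_erase c₁ (hE (hDE ▸ hc₁D))
  obtain ⟨hli', hspan'⟩ := hli.exchange hc₁ hspan hnspan
  have hcoe : (↑(insert c₂ (B.erase c₁)) : Set (Finset (Sym2 V))) = insert c₂ (↑B \ {c₁}) := by
    simp
  refine ⟨?_, linIndep_iff_linearIndepOn.mpr (hcoe ▸ hli'),
    spansCycles_iff_cycleSpace_le.mpr (by rw [hcoe, hspan', hB.span_charVec_eq])⟩
  simpa [Finset.forall_mem_insert] using ⟨hc₂, fun c _ hc => hB.1 c hc⟩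

theorem weight_le (hB : IsCycleBasis G B)
    (hloc : ∀ c₁ ∈ B, ∀ c₂, IsCycle G c₂ → c₂ ∉ B → lambdaEq1 B c₁ c₂ → c₁.card ≤ c₂.card)
    {B' : Finset (Finset (Sym2 V))} (hB' : IsCycleBasis G B') : weight B ≤ weight B' := by
  obtain ⟨e, he⟩ := hB.exists_equiv_lambdaEq1 hB'
  have hcard : ∀ d : B', (e d : Finset (Sym2 V)).card ≤ (d : Finset (Sym2 V)).card := by
    intro d
    by_cases hdB : (d : Finset (Sym2 V)) ∈ B
    · obtain ⟨D, hDB, hDd, hD⟩ := he d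
      have hDeq : D = {(d : Finset (Sym2 V))} := hB.2.1.eq_of_cycleSum_eq hDB
        (Finset.singleton_subset_iff.mpr hdB) (by rw [hDd, cycleSum_singleton])
      rw [hDeq, Finset.mem_singleton] at hD
      rw [hD]
    · exact hloc _ (e d).2 _ (hB'.1 d d.2) hdB (he d)
  calc weight B = ∑ c : B, (c : Finset (Sym2 V)).card := (Finset.sum_coe_sort B _).symm
    _ = ∑ d : B', (e d : Finset (Sym2 V)).card := (e.sum_comp _).symm
    _ ≤ ∑ d : B', (d : Finset (Sym2 V)).card := Finset.sum_le_sum fun d _ => hcard d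
    _ = weight B' := Finset.sum_coe_sort B' _

end IsCycleBasis

theorem IsMCB.card_le_of_lambdaEq1 {G : SimpleGraph V} {B : Finset (Finset (Sym2 V))}
    (hB : IsMCB G B) {c₁ c₂ : Finset (Sym2 V)} (hc₁ : c₁ ∈ B) (hc₂ : IsCycle G c₂)
    (hc₂B : c₂ ∉ B) (hrep : lambdaEq1 B c₁ c₂) : c₁.card ≤ c₂.card := by
  have hle := hB.2 _ (hB.1.exchange hc₁ hc₂ hrep)
  have hc₁w : c₁.card + weight (B.erase c₁) = weight B := Finset.add_sum_erase B _ hc₁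
  have hc₂w : weight (insert c₂ (B.erase c₁)) = c₂.card + weight (B.erase c₁) :=
    Finset.sum_insert fun h => hc₂B (Finset.mem_of_mem_erase h)
  omega

theorem isMCB_iff_locally_minimal_general (G : SimpleGraph V) (B : Finset (Finset (Sym2 V))) :
    IsMCB G B ↔
      IsCycleBasis G B ∧
        ∀ c1 ∈ B, ∀ c2 : Finset (Sym2 V), IsCycle G c2 → c2 ∉ B →
          lambdaEq1 B c1 c2 → c1.card ≤ c2.card :=
  ⟨fun h => ⟨h.1, fun _ hc₁ _ hc₂ hc₂B hrep => h.card_le_of_lambdaEq1 hc₁ hc₂ hc₂B hrep⟩,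
    fun ⟨hB, hloc⟩ => ⟨hB, fun _ hB' => hB.weight_le hloc hB'⟩⟩

/-- A set `B` of cycles of `G` is a minimum cycle basis iff it is a cycle
basis and every `c₁ ∈ B` with `λ_B(c₁, c₂) = 1` for a cycle `c₂ ∉ B` satisfies
`ω(c₁) ≤ ω(c₂)`. -/
theorem isMCB_iff_locally_minimal (G : SimpleGraph V) (B : Finset (Finset (Sym2 V)))
    (hBcyc : ∀ c ∈ B, IsCycle G c) :
    IsMCB G B ↔
      IsCycleBasis G B ∧
        ∀ c1 ∈ B, ∀ c2 : Finset (Sym2 V), IsCycle G c2 → c2 ∉ B →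
          lambdaEq1 B c1 c2 → c1.card ≤ c2.card :=
  isMCB_iff_locally_minimal_general G B

end MCBI
end

section
/- Let G be a finite simple graph and let B1, B2 be two minimum cycle bases of G. Then for every natural number l, the number of cycles of weight l in B1 equals the number of cycles of weight l in B2. -/
namespace MCBI

variable {V : Type*} [Fintype V] [DecidableEq V]

/-! Auxiliary development -/

def phi (c : Finset (Sym2 V)) : Sym2 V → ZMod 2 := fun e => if e ∈ c then 1 else 0

lemma phi_injective : Function.Injective (phi (V := V)) := by
  intro c d h
  ext e
  have := congrFun h e
  by_cases hc : e ∈ c <;> by_cases hd : e ∈ d <;> simp [phi, hc, hd] at this ⊢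

lemma natCast_zmod_two (n : ℕ) : ((n : ZMod 2)) = if Odd n then 1 else 0 := by
  rw [← ZMod.natCast_mod n 2]
  rcases Nat.mod_two_eq_zero_or_one n with h | h <;>
    simp [h, Nat.odd_iff]

lemma phi_cycleSum (D : Finset (Finset (Sym2 V))) :
    phi (cycleSum D) = ∑ c ∈ D, phi c := by
  funext e
  simp only [phi, cycleSum, Finset.mem_filter, Finset.mem_univ, true_and, Finset.sum_apply]
  rw [Finset.sum_boole, natCast_zmod_two]

lemma phi_empty : phi (∅ : Finset (Sym2 V)) = 0 := by
  funext e; simp [phi]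

lemma cycleSum_eq_iff {D : Finset (Finset (Sym2 V))} {x : Finset (Sym2 V)} :
    cycleSum D = x ↔ ∑ c ∈ D, phi c = phi x := by
  constructor
  · intro h; rw [← phi_cycleSum, h]
  · intro h; exact phi_injective (by rw [phi_cycleSum, h])

lemma self_add (x : Sym2 V → ZMod 2) : x + x = 0 := by
  funext e
  exact CharTwo.add_self_eq_zero (x e)

lemma eq_of_add_eq_zero' {x y : Sym2 V → ZMod 2} (h : x + y = 0) : x = y := by
  have : x + (y + y) = (x + y) + y := (add_assoc x y y).symm
  rw [self_add, h, add_zero, zero_add] at this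
  exact this

lemma sum_phi_symmDiff (D1 D2 : Finset (Finset (Sym2 V))) :
    ∑ c ∈ symmDiff D1 D2, phi c = ∑ c ∈ D1, phi c + ∑ c ∈ D2, phi c := by
  classical
  have hsub : D1 ∩ D2 ⊆ D1 ∪ D2 :=
    Finset.inter_subset_left.trans Finset.subset_union_left
  have h1 := Finset.sum_union_inter (s₁ := D1) (s₂ := D2) (f := phi)
  have h2 : ∑ c ∈ (D1 ∪ D2) \ (D1 ∩ D2), phi c + ∑ c ∈ D1 ∩ D2, phi c
      = ∑ c ∈ D1 ∪ D2, phi c := Finset.sum_sdiff hsub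
  rw [symmDiff_eq_sup_sdiff_inf, Finset.sup_eq_union, Finset.inf_eq_inter, ← h1, ← h2,
    add_assoc, self_add, add_zero]

lemma linIndep_iff_sum {B : Finset (Finset (Sym2 V))} :
    LinIndep B ↔ ∀ D ⊆ B, ∑ c ∈ D, phi c = 0 → D = ∅ := by
  constructor
  · intro h D hD hsum
    by_contra hne
    refine h D hD (Finset.nonempty_of_ne_empty hne) ?_
    exact cycleSum_eq_iff.mpr (by rw [hsum, phi_empty])
  · intro h D hD hne hcyc
    have := h D hD (by rw [← phi_empty, ← cycleSum_eq_iff]; exact hcyc)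
    exact hne.ne_empty this

lemma linearIndependent_of_sum {S : Finset (Finset (Sym2 V))}
    (hind : ∀ D ⊆ S, ∑ c ∈ D, phi c = 0 → D = ∅) :
    LinearIndependent (ZMod 2) (fun c : {x // x ∈ S} => phi (c : Finset (Sym2 V))) := by
  classical
  rw [Fintype.linearIndependent_iff]
  intro g hg
  have hx : ∀ x : ZMod 2, x = 0 ∨ x = 1 := by decide
  set D : Finset (Finset (Sym2 V)) :=
    (S.attach.filter (fun i => g i = 1)).image Subtype.val with hD
  have hDS : D ⊆ S := by
    intro x hx'
    simp only [hD, Finset.mem_image, Finset.mem_filter] at hx'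
    obtain ⟨i, _, rfl⟩ := hx'
    exact i.2
  have hsum : ∑ c ∈ D, phi c = 0 := by
    have heq : ∑ c ∈ D, phi c = ∑ i : {x // x ∈ S}, g i • phi (i : Finset (Sym2 V)) := by
      rw [hD, Finset.sum_image (fun a _ b _ h => Subtype.ext h), Finset.sum_filter,
        Finset.univ_eq_attach]
      exact Finset.sum_congr rfl (fun i _ => by rcases hx (g i) with h | h <;> simp [h])
    rw [heq, hg]
  have hDempty := hind D hDS hsum
  intro i
  rcases hx (g i) with h | h
  · exact h
  · exfalso
    have : (i : Finset (Sym2 V)) ∈ D := by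
      simp only [hD, Finset.mem_image, Finset.mem_filter]
      exact ⟨i, ⟨Finset.mem_attach _ _, h⟩, rfl⟩
    rw [hDempty] at this
    exact absurd this (Finset.notMem_empty _)

lemma card_le_of_forall_subsetsum (S1 S2 : Finset (Finset (Sym2 V)))
    (hind : ∀ D ⊆ S1, ∑ c ∈ D, phi c = 0 → D = ∅)
    (hspan : ∀ c ∈ S1, ∃ D ⊆ S2, ∑ d ∈ D, phi d = phi c) :
    S1.card ≤ S2.card := by
  classical
  set W : Submodule (ZMod 2) (Sym2 V → ZMod 2) :=
    Submodule.span (ZMod 2) (↑(S2.image phi) : Set (Sym2 V → ZMod 2)) with hW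
  have hmem : ∀ c ∈ S1, phi c ∈ W := by
    intro c hc
    obtain ⟨D, hDS, hsum⟩ := hspan c hc
    rw [← hsum]
    refine Submodule.sum_mem _ (fun d hd => Submodule.subset_span ?_)
    simp only [Finset.coe_image, Set.mem_image, Finset.mem_coe]
    exact ⟨d, hDS hd, rfl⟩
  have hli : LinearIndependent (ZMod 2)
      (fun c : {x // x ∈ S1} => phi (c : Finset (Sym2 V))) :=
    linearIndependent_of_sum hind
  let g : {x // x ∈ S1} → W := fun c => ⟨phi (c : Finset (Sym2 V)), hmem _ c.2⟩
  have hlig : LinearIndependent (ZMod 2) g := by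
    apply LinearIndependent.of_comp W.subtype
    exact hli
  have h1 : Fintype.card {x // x ∈ S1} ≤ Module.finrank (ZMod 2) W :=
    hlig.fintype_card_le_finrank
  have h2 : Module.finrank (ZMod 2) W ≤ (S2.image phi).card :=
    finrank_span_finset_le_card _
  calc S1.card = Fintype.card {x // x ∈ S1} := (Fintype.card_coe S1).symm
    _ ≤ Module.finrank (ZMod 2) W := h1
    _ ≤ (S2.image phi).card := h2
    _ ≤ S2.card := Finset.card_image_le

lemma mcb_count_le (G : SimpleGraph V) (B1 B2 : Finset (Finset (Sym2 V)))
    (hB1 : IsMCB G B1) (hB2 : IsMCB G B2) (l : ℕ) :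
    (B1.filter fun c => c.card ≤ l).card ≤ (B2.filter fun c => c.card ≤ l).card := by
  classical
  set S1 := B1.filter fun c => c.card ≤ l with hS1
  set S2 := B2.filter fun c => c.card ≤ l with hS2
  have hB1ind := linIndep_iff_sum.mp hB1.1.2.1
  have hB2ind := linIndep_iff_sum.mp hB2.1.2.1
  by_cases hsp : ∀ c ∈ S1, ∃ D ⊆ S2, ∑ d ∈ D, phi d = phi c
  · exact card_le_of_forall_subsetsum S1 S2
      (fun D hD h => hB1ind D (hD.trans (Finset.filter_subset _ _)) h) hsp
  · exfalso
    push_neg at hsp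
    obtain ⟨c, hcS1, hcno⟩ := hsp
    rw [hS1, Finset.mem_filter] at hcS1
    obtain ⟨hcB1, hcl⟩ := hcS1
    have hccyc : IsCycle G c := hB1.1.1 c hcB1
    obtain ⟨D, hDB2, hDsum0⟩ := hB2.1.2.2 c hccyc
    have hDsum : ∑ d ∈ D, phi d = phi c := cycleSum_eq_iff.mp hDsum0
    have hd : ∃ d ∈ D, ¬ d.card ≤ l := by
      by_contra h
      push_neg at h
      refine hcno D (fun x hx => ?_) hDsum
      rw [hS2, Finset.mem_filter]
      exact ⟨hDB2 hx, h x hx⟩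
    obtain ⟨d, hdD, hdl⟩ := hd
    have hdB2 : d ∈ B2 := hDB2 hdD
    have hcB2 : c ∉ B2 := by
      intro h
      refine hcno {c} (fun x hx => ?_) (by simp)
      rw [Finset.mem_singleton] at hx
      subst hx
      rw [hS2, Finset.mem_filter]
      exact ⟨h, hcl⟩
    have hcd : c ≠ d := by
      intro h; rw [← h] at hdl; exact hdl hcl
    have hcnotin : c ∉ B2.erase d := fun h => hcB2 (Finset.mem_of_mem_erase h)
    set B2' := insert c (B2.erase d) with hB2'
    -- weight
    have hw : weight B2' < weight B2 := by
      have e1 : weight B2' = c.card + ∑ x ∈ B2.erase d, x.card := by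
        rw [hB2', weight, Finset.sum_insert hcnotin]
      have e2 : (∑ x ∈ B2.erase d, x.card) + d.card = weight B2 :=
        Finset.sum_erase_add _ _ hdB2
      omega
    -- basis
    have hcyc' : ∀ y ∈ B2', IsCycle G y := by
      intro y hy
      rcases Finset.mem_insert.mp hy with rfl | hy
      · exact hccyc
      · exact hB2.1.1 y (Finset.mem_of_mem_erase hy)
    have hind' : LinIndep B2' := by
      rw [linIndep_iff_sum]
      intro E hE hEsum
      by_cases hcE : c ∈ E
      · exfalso
        set E' := E.erase c with hE'def
        have hE' : E' ⊆ B2.erase d := by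
          intro x hx
          have hxc : x ≠ c := Finset.ne_of_mem_erase hx
          rcases Finset.mem_insert.mp (hE (Finset.mem_of_mem_erase hx)) with h | h
          · exact absurd h hxc
          · exact h
        have hsumE'0 : (∑ x ∈ E', phi x) + phi c = 0 := by
          rw [Finset.sum_erase_add _ _ hcE]; exact hEsum
        have hsumE' : ∑ x ∈ E', phi x = phi c := eq_of_add_eq_zero' hsumE'0
        set F := symmDiff E' D with hF
        have hFB2 : F ⊆ B2 := by
          intro x hx
          rcases Finset.mem_symmDiff.mp hx with ⟨h, _⟩ | ⟨h, _⟩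
          · exact Finset.mem_of_mem_erase (hE' h)
          · exact hDB2 h
        have hFsum : ∑ x ∈ F, phi x = 0 := by
          rw [hF, sum_phi_symmDiff, hsumE', hDsum, self_add]
        have hdF : d ∈ F := by
          rw [hF, Finset.mem_symmDiff]
          right
          exact ⟨hdD, fun h => (Finset.ne_of_mem_erase (hE' h)) rfl⟩
        have := hB2ind F hFB2 hFsum
        rw [this] at hdF
        exact absurd hdF (Finset.notMem_empty _)
      · have hEB2 : E ⊆ B2 := by
          intro x hx
          rcases Finset.mem_insert.mp (hE hx) with rfl | h
          · exact absurd hx hcE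
          · exact Finset.mem_of_mem_erase h
        exact hB2ind E hEB2 hEsum
    have hspan' : SpansCycles G B2' := by
      intro x hx
      obtain ⟨Dx, hDxB2, hDxsum0⟩ := hB2.1.2.2 x hx
      have hDxsum : ∑ y ∈ Dx, phi y = phi x := cycleSum_eq_iff.mp hDxsum0
      by_cases hdDx : d ∈ Dx
      · set F := symmDiff Dx D with hF
        have hdF : d ∉ F := by
          rw [hF, Finset.mem_symmDiff]
          rintro (⟨_, h⟩ | ⟨_, h⟩)
          · exact h hdD
          · exact h hdDx
        have hFB2 : F ⊆ B2.erase d := by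
          intro y hy
          refine Finset.mem_erase.mpr ⟨?_, ?_⟩
          · intro h; rw [h] at hy; exact hdF hy
          · rcases Finset.mem_symmDiff.mp hy with ⟨h, _⟩ | ⟨h, _⟩
            · exact hDxB2 h
            · exact hDB2 h
        have hcF : c ∉ F := fun h => hcB2 (Finset.mem_of_mem_erase (hFB2 h))
        refine ⟨insert c F, ?_, ?_⟩
        · intro y hy
          rcases Finset.mem_insert.mp hy with rfl | h
          · exact Finset.mem_insert_self _ _
          · exact Finset.mem_insert_of_mem (hFB2 h)
        · rw [cycleSum_eq_iff, Finset.sum_insert hcF, hF, sum_phi_symmDiff, hDxsum, hDsum,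
            add_left_comm, self_add, add_zero]
      · refine ⟨Dx, ?_, hDxsum0⟩
        intro y hy
        refine Finset.mem_insert_of_mem (Finset.mem_erase.mpr ⟨?_, hDxB2 hy⟩)
        intro h; rw [h] at hy; exact hdDx hy
    exact absurd (hB2.2 B2' ⟨hcyc', hind', hspan'⟩) (by omega)

lemma empty_notMem_of_linIndep {B : Finset (Finset (Sym2 V))} (h : LinIndep B) :
    (∅ : Finset (Sym2 V)) ∉ B := by
  intro hmem
  refine h {∅} (Finset.singleton_subset_iff.mpr hmem) ⟨∅, Finset.mem_singleton_self _⟩ ?_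
  rw [cycleSum_eq_iff]
  simp [phi_empty]

/-- Any two minimum cycle bases of `G` contain the same number of cycles
of each weight `l`. -/
theorem mcb_same_number_of_cycles_of_each_weight (G : SimpleGraph V)
    (B1 B2 : Finset (Finset (Sym2 V))) (hB1 : IsMCB G B1) (hB2 : IsMCB G B2) (l : ℕ) :
    (B1.filter fun c => c.card = l).card = (B2.filter fun c => c.card = l).card := by
  classical
  have hcount : ∀ m : ℕ, (B1.filter fun c => c.card ≤ m).card
      = (B2.filter fun c => c.card ≤ m).card := fun m =>
    le_antisymm (mcb_count_le G B1 B2 hB1 hB2 m) (mcb_count_le G B2 B1 hB2 hB1 m)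
  rcases Nat.eq_zero_or_pos l with rfl | hl
  · have h1 : B1.filter (fun c => c.card = 0) = ∅ := by
      rw [Finset.filter_eq_empty_iff]
      intro c hc hcard
      exact empty_notMem_of_linIndep hB1.1.2.1 (Finset.card_eq_zero.mp hcard ▸ hc)
    have h2 : B2.filter (fun c => c.card = 0) = ∅ := by
      rw [Finset.filter_eq_empty_iff]
      intro c hc hcard
      exact empty_notMem_of_linIndep hB2.1.2.1 (Finset.card_eq_zero.mp hcard ▸ hc)
    rw [h1, h2]
  · have key : ∀ B : Finset (Finset (Sym2 V)),
        (B.filter fun c => c.card = l).card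
          = (B.filter fun c => c.card ≤ l).card - (B.filter fun c => c.card ≤ l - 1).card := by
      intro B
      have hsub : (B.filter fun c => c.card ≤ l - 1) ⊆ (B.filter fun c => c.card ≤ l) := by
        apply Finset.monotone_filter_right
        intro x hx; omega
      have heq : (B.filter fun c => c.card = l)
          = (B.filter fun c => c.card ≤ l) \ (B.filter fun c => c.card ≤ l - 1) := by
        ext c
        simp only [Finset.mem_filter, Finset.mem_sdiff, not_and]
        constructor
        · intro ⟨h1, h2⟩
          exact ⟨⟨h1, by omega⟩, fun _ => by omega⟩
        · intro ⟨⟨h1, h2⟩, h3⟩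
          have := h3 h1
          exact ⟨h1, by omega⟩
      rw [heq, Finset.card_sdiff_of_subset hsub]
    rw [key B1, key B2, hcount l, hcount (l - 1)]

end MCBI
end
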